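/- Let d ≥ 1 be an integer. If A ⊆ ℤ is completely syndetic in ℤ, then the d-fold Cartesian product A^d = {(a₁, …, a_d) : each aᵢ ∈ A} is completely syndetic in ℤ^d. -/
import Mathlib


/-- `A ⊆ G` is `n`-syndetic (additive notation): there is a finite `F ⊆ G` such that every
subset `S ⊆ G` with `|S| ≤ n` satisfies `S ⊆ f + A` for some `f ∈ F`. -/
def IsNSyndetic {G : Type*} [AddGroup G] (A : Set G) (n : ℕ) : Prop :=
  ∃ F : Finset G, ∀ S : Finset G, S.card ≤ n → ∃ f ∈ F, (S : Set G) ⊆ (f + ·) '' A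

/-- `A ⊆ G` is completely syndetic: `n`-syndetic for every `n ≥ 1`. -/
def IsCS {G : Type*} [AddGroup G] (A : Set G) : Prop :=
  ∀ n : ℕ, 1 ≤ n → IsNSyndetic A n

/-- If `A ⊆ ℤ` is completely syndetic, then for any `d ≥ 1` the `d`-fold Cartesian power
`A^d = {v : each coordinate of v lies in A}` is completely syndetic in `ℤ^d`. -/
theorem cs_pow_of_cs (d : ℕ) (hd : 1 ≤ d) (A : Set ℤ) (hA : IsCS A) :
    IsCS {v : Fin d → ℤ | ∀ i, v i ∈ A} := by
  intro n hn
  obtain ⟨F, hF⟩ := hA n hn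
  refine ⟨Fintype.piFinset (fun _ : Fin d => F), fun S hS => ?_⟩
  have h : ∀ i : Fin d, ∃ f ∈ F, ((S.image (· i) : Finset ℤ) : Set ℤ) ⊆ (f + ·) '' A := by
    intro i
    exact hF _ (le_trans (Finset.card_image_le) hS)
  choose f hfF hfS using h
  refine ⟨f, Fintype.mem_piFinset.2 hfF, fun v hv => ?_⟩
  refine ⟨v - f, fun i => ?_, by simp⟩
  obtain ⟨a, ha, hav⟩ := hfS i (Finset.mem_coe.2 (Finset.mem_image_of_mem _ hv))
  simpa [← hav] using ha
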